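/- One-step Hahn–Banach extension: let X be a real linear 2-normed space, W a subspace, x₀ ∈ X \ W, and T_W a bounded b-linear functional on W × ⟨b⟩. Then T_W extends to a bounded b-linear functional T₀ on (W + ℝx₀) × ⟨b⟩ with ‖T₀‖ = ‖T_W‖. -/

import Mathlib

/-!
For fixed `b`, the map `x ↦ ‖x, b‖` is a seminorm on `X`, and a b-linear functional on `W` of
norm `M` is a linear functional dominated by the seminorm `M ‖·, b‖`. The Hahn–Banach theorem
extends it to all of `X` under the same domination; restricted to `W + ℝx₀`, the extension admits
exactly the same bounds as `T_W`, hence has the same norm.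
-/

open Filter Topology

/-- A linear 2-normed space structure (Gähler): a 2-norm on a real vector space. -/
structure TwoNorm (X : Type*) [AddCommGroup X] [Module ℝ X] where
  N : X → X → ℝ
  eq_zero_iff : ∀ x y, N x y = 0 ↔ ¬ LinearIndependent ℝ ![x, y]
  symm : ∀ x y, N x y = N y x
  smul_left : ∀ (a : ℝ) (x y : X), N (a • x) y = |a| * N x y
  add_right : ∀ x y z : X, N x (y + z) ≤ N x y + N x z

variable {X : Type*} [AddCommGroup X] [Module ℝ X]

/-- Convergence of a sequence in a linear 2-normed space. -/
def TwoNorm.Conv (P : TwoNorm X) (x : ℕ → X) (l : X) : Prop :=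
  ∀ y : X, Tendsto (fun n => P.N (x n - l) y) atTop (nhds 0)

/-- Cauchy sequence in a linear 2-normed space. -/
def TwoNorm.IsCauchySeq (P : TwoNorm X) (x : ℕ → X) : Prop :=
  ∀ z : X, Tendsto (fun p : ℕ × ℕ => P.N (x p.1 - x p.2) z) atTop (nhds 0)

/-- A 2-Banach space: every Cauchy sequence converges. -/
def TwoNorm.Complete (P : TwoNorm X) : Prop :=
  ∀ x : ℕ → X, P.IsCauchySeq x → ∃ l, P.Conv x l

/-- A b-linear functional (identified with `x ↦ T (x, b)`, a linear map) is bounded. -/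
def TwoNorm.BddB (P : TwoNorm X) (b : X) (T : X →ₗ[ℝ] ℝ) : Prop :=
  ∃ M : ℝ, 0 < M ∧ ∀ x, |T x| ≤ M * P.N x b

/-- Norm of a bounded b-linear functional. -/
noncomputable def TwoNorm.bNorm (P : TwoNorm X) (b : X) (T : X →ₗ[ℝ] ℝ) : ℝ :=
  sInf {M : ℝ | 0 < M ∧ ∀ x, |T x| ≤ M * P.N x b}

/-- Boundedness of a b-linear functional defined on a subspace `W`. -/
def TwoNorm.BddBOn (P : TwoNorm X) (b : X) (W : Submodule ℝ X) (T : W →ₗ[ℝ] ℝ) : Prop :=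
  ∃ M : ℝ, 0 < M ∧ ∀ x : W, |T x| ≤ M * P.N x b

/-- Norm of a bounded b-linear functional defined on a subspace `W`. -/
noncomputable def TwoNorm.bNormOn (P : TwoNorm X) (b : X) (W : Submodule ℝ X)
    (T : W →ₗ[ℝ] ℝ) : ℝ :=
  sInf {M : ℝ | 0 < M ∧ ∀ x : W, |T x| ≤ M * P.N x b}

/-- Continuity at a point with respect to the open-ball topology of the 2-norm. -/
def TwoNorm.ContAt (P : TwoNorm X) (T : X →ₗ[ℝ] ℝ) (x₀ : X) : Prop :=
  ∀ ε > 0, ∃ (e : X) (δ : ℝ), 0 < δ ∧ ∀ x, P.N (x - x₀) e < δ → |T x - T x₀| < ε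

namespace TwoNorm

variable (P : TwoNorm X)

theorem N_zero_right (x : X) : P.N x 0 = 0 := by
  rw [P.eq_zero_iff]
  intro h
  simpa using h.ne_zero 1

theorem N_neg_left (x y : X) : P.N (-x) y = P.N x y := by
  rw [show (-x : X) = (-1 : ℝ) • x by simp, P.smul_left]
  simp

theorem N_add_left (x y z : X) : P.N (x + y) z ≤ P.N x z + P.N y z := by
  rw [P.symm (x + y) z, P.symm x z, P.symm y z]
  exact P.add_right z x y

theorem N_nonneg (x y : X) : 0 ≤ P.N x y := by
  have h := P.N_add_left x (-x) y
  rw [add_neg_cancel, P.N_neg_left, P.symm, P.N_zero_right] at h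
  linarith

def seminormRight (b : X) : Seminorm ℝ X where
  toFun x := P.N x b
  map_zero' := by rw [P.symm, P.N_zero_right]
  add_le' x y := P.N_add_left x y b
  neg' x := P.N_neg_left x b
  smul' a x := P.smul_left a x b

@[simp]
theorem seminormRight_apply (b x : X) : P.seminormRight b x = P.N x b := rfl

def boundsOn (b : X) (W : Submodule ℝ X) (T : W →ₗ[ℝ] ℝ) : Set ℝ :=
  {M : ℝ | 0 < M ∧ ∀ x : W, |T x| ≤ M * P.N x b}

variable {P} {b : X} {W : Submodule ℝ X} {T : W →ₗ[ℝ] ℝ}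

theorem bddBOn_iff_nonempty_boundsOn : P.BddBOn b W T ↔ (P.boundsOn b W T).Nonempty := Iff.rfl

theorem bNormOn_eq_sInf_boundsOn : P.bNormOn b W T = sInf (P.boundsOn b W T) := rfl

theorem bNormOn_nonneg : 0 ≤ P.bNormOn b W T :=
  Real.sInf_nonneg fun _ hM => hM.1.le

theorem bNormOn_le_of_mem_boundsOn {M : ℝ} (hM : M ∈ P.boundsOn b W T) : P.bNormOn b W T ≤ M :=
  csInf_le ⟨0, fun _ hM => hM.1.le⟩ hM

theorem abs_le_bNormOn_mul (hT : P.BddBOn b W T) (x : W) : |T x| ≤ P.bNormOn b W T * P.N x b := by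
  rcases (P.N_nonneg x b).eq_or_lt with hx | hx
  · obtain ⟨M, hM⟩ := hT
    simpa [← hx] using hM.2 x
  · rw [← div_le_iff₀ hx]
    exact le_csInf hT fun M hM => (div_le_iff₀ hx).mpr (hM.2 x)

theorem boundsOn_domRestrict {V : Submodule ℝ X} (hWV : W ≤ V)
    {g : X →ₗ[ℝ] ℝ} (hgT : ∀ x : W, g x = T x) (hg : ∀ x, |g x| ≤ P.bNormOn b W T * P.N x b) :
    P.boundsOn b V (g.domRestrict V) = P.boundsOn b W T := by
  ext M
  constructor
  · rintro ⟨hM, hMV⟩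
    refine ⟨hM, fun x => ?_⟩
    simpa [hgT x] using hMV ⟨x, hWV x.2⟩
  · intro hMW
    refine ⟨hMW.1, fun x => (hg x).trans ?_⟩
    exact mul_le_mul_of_nonneg_right (bNormOn_le_of_mem_boundsOn hMW) (P.N_nonneg x b)

variable (P) in
theorem exists_extension_abs_le_mul {c : ℝ} (hc : 0 ≤ c) (hT : ∀ x : W, |T x| ≤ c * P.N x b) :
    ∃ g : X →ₗ[ℝ] ℝ, (∀ x : W, g x = T x) ∧ ∀ x, |g x| ≤ c * P.N x b := by
  have hTp : ∀ x : W, T x ≤ (c.toNNReal • P.seminormRight b) x := fun x => by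
    simpa [NNReal.smul_def, hc] using (le_abs_self _).trans (hT x)
  simpa [NNReal.smul_def, hc] using Module.Dual.exists_extension_of_le_seminorm_real W T hTp

end TwoNorm

theorem stmt14_general (P : TwoNorm X) (b : X) (W : Submodule ℝ X) (x₀ : X)
    (TW : W →ₗ[ℝ] ℝ) (hTW : P.BddBOn b W TW) :
    ∃ T₀ : ↥(W ⊔ Submodule.span ℝ {x₀}) →ₗ[ℝ] ℝ,
      P.BddBOn b (W ⊔ Submodule.span ℝ {x₀}) T₀ ∧
      (∀ (x : X) (hx : x ∈ W), T₀ ⟨x, Submodule.mem_sup_left hx⟩ = TW ⟨x, hx⟩) ∧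
      P.bNormOn b (W ⊔ Submodule.span ℝ {x₀}) T₀ = P.bNormOn b W TW := by
  obtain ⟨g, hgT, hg⟩ :=
    P.exists_extension_abs_le_mul TwoNorm.bNormOn_nonneg (TwoNorm.abs_le_bNormOn_mul hTW)
  have hbounds :=
    TwoNorm.boundsOn_domRestrict (le_sup_left : W ≤ W ⊔ Submodule.span ℝ {x₀}) hgT hg
  refine ⟨g.domRestrict (W ⊔ Submodule.span ℝ {x₀}), ?_, fun x hx => hgT ⟨x, hx⟩, ?_⟩
  · rw [TwoNorm.bddBOn_iff_nonempty_boundsOn, hbounds]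
    exact hTW
  · rw [TwoNorm.bNormOn_eq_sInf_boundsOn, hbounds, TwoNorm.bNormOn_eq_sInf_boundsOn]

theorem stmt14 (P : TwoNorm X) (b : X) (W : Submodule ℝ X) (x₀ : X)
    (hx₀ : x₀ ∉ W) (TW : W →ₗ[ℝ] ℝ) (hTW : P.BddBOn b W TW) :
    ∃ T₀ : ↥(W ⊔ Submodule.span ℝ {x₀}) →ₗ[ℝ] ℝ,
      P.BddBOn b (W ⊔ Submodule.span ℝ {x₀}) T₀ ∧
      (∀ (x : X) (hx : x ∈ W), T₀ ⟨x, Submodule.mem_sup_left hx⟩ = TW ⟨x, hx⟩) ∧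
      P.bNormOn b (W ⊔ Submodule.span ℝ {x₀}) T₀ = P.bNormOn b W TW :=
  stmt14_general P b W x₀ TW hTW
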